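/- Let 𝔉 be a cubical iterated graph system with parameters (d*,L*,s*) and d* ≥ 2. Then for every m ∈ ℕ the replacement graph G_m contains at least 2^m pairwise vertex-disjoint paths from I_{t₁,−}^{(m)} to I_{t₁,+}^{(m)}, each of whose edges has type t₁. In particular, for every M > 0 there exist m ∈ ℕ and t ∈ 𝒯 such that Θ(I_{t,−}^{(m)}, I_{t,+}^{(m)}, G_m) contains at least M pairwise disjoint paths. -/

import Mathlib

namespace IGSP

/-- An iterated graph system: a finite connected oriented graph `G₁ = (S, E)`, a set of
types `T` with a surjective typing map on edges, and nonempty gluing rules `I_t ⊆ S × S`. -/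
structure System (S T : Type) where
  E : S → S → Prop
  not_both : ∀ x y : S, E x y → ¬ E y x
  irrefl : ∀ x : S, ¬ E x x
  conn : ∀ x y : S, Relation.ReflTransGen (fun a b => E a b ∨ E b a) x y
  typ : S → S → T
  typ_surj : ∀ t : T, ∃ x y, E x y ∧ typ x y = t
  glue : T → S → S → Prop
  glue_nonempty : ∀ t : T, ∃ x y, glue t x y

variable {S T : Type}

/-- Words of length `m` over the symbol set `S`. -/
abbrev Word (S : Type) (m : ℕ) := Fin m → S

open Classical in
/-- The replacement graphs together with their typing functions, defined by recursion on
the length of words: `G₁ = (S,E)` and an oriented edge `(w,v) ∈ E_{m+1}` holds iff either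
the length-`m` prefixes agree and the last symbols form an edge of `G₁`, or the prefixes
form an edge of `E_m` and the last symbols belong to the gluing rule of its type. -/
noncomputable def replData [Nonempty T] (F : System S T) :
    (L : ℕ) → (Word S L → Word S L → Prop) × (Word S L → Word S L → T)
  | 0 => ⟨fun _ _ => False, fun _ _ => Classical.arbitrary T⟩
  | 1 => ⟨fun w v => F.E (w 0) (v 0), fun w v => F.typ (w 0) (v 0)⟩
  | L + 2 =>
      ⟨fun w v =>
        (Fin.init w = Fin.init v ∧ F.E (w (Fin.last (L + 1))) (v (Fin.last (L + 1)))) ∨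
        ((replData F (L + 1)).1 (Fin.init w) (Fin.init v) ∧
          F.glue ((replData F (L + 1)).2 (Fin.init w) (Fin.init v))
            (w (Fin.last (L + 1))) (v (Fin.last (L + 1)))),
       fun w v =>
        if Fin.init w = Fin.init v then F.typ (w (Fin.last (L + 1))) (v (Fin.last (L + 1)))
        else (replData F (L + 1)).2 (Fin.init w) (Fin.init v)⟩

/-- The oriented edge relation of the replacement graph on words of length `L`. -/
def edge [Nonempty T] (F : System S T) (L : ℕ) (w v : Word S L) : Prop :=
  (replData F L).1 w v

/-- The typing function of the replacement graph on words of length `L`. -/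
noncomputable def etyp [Nonempty T] (F : System S T) (L : ℕ) (w v : Word S L) : T :=
  (replData F L).2 w v

/-- The unoriented edge ("{w,v} ∈ E_L") relation. -/
def adjW [Nonempty T] (F : System S T) (L : ℕ) (w v : Word S L) : Prop :=
  edge F L w v ∨ edge F L v w

/-- The replacement graph `G_L` as a simple graph on words of length `L`. -/
noncomputable def replGraph [Nonempty T] (F : System S T) (L : ℕ) : SimpleGraph (Word S L) where
  Adj w v := w ≠ v ∧ adjW F L w v
  symm := by
    constructor
    intro w v h
    exact ⟨Ne.symm h.1, Or.symm h.2⟩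
  loopless := by
    constructor
    intro w h
    exact h.1 rfl

/-- The degree of a word `w` in the replacement graph `G_L`: the number of `v` with
`{w,v} ∈ E_L`. -/
noncomputable def degGm [Nonempty T] (F : System S T) (L : ℕ) (w : Word S L) : ℕ :=
  {v : Word S L | adjW F L w v}.ncard

/-- `I_{t,+}`, the set of symbols occurring as the first coordinate of the gluing rule. -/
def Iplus (F : System S T) (t : T) : Set S := {a | ∃ b, F.glue t a b}

/-- `I_{t,-}`, the set of symbols occurring as the second coordinate of the gluing rule. -/
def Iminus (F : System S T) (t : T) : Set S := {b | ∃ a, F.glue t a b}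

/-- `I_{t,★}` where the orientation `★` is encoded by a boolean: `true = +`, `false = -`. -/
def Iset (F : System S T) (t : T) : Bool → Set S
  | true => Iplus F t
  | false => Iminus F t

/-- `I_{t,★}^{(m)} = (I_{t,★})^m ⊆ W_m`. -/
def IsetW (F : System S T) (t : T) (b : Bool) (m : ℕ) : Set (Word S m) :=
  {w | ∀ i, w i ∈ Iset F t b}

/-- The boundary `∂G_m = ⋃_{(t,★)} I_{t,★}^{(m)}`. -/
def boundaryW (F : System S T) (m : ℕ) : Set (Word S m) :=
  ⋃ (t : T) (b : Bool), IsetW F t b m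

/-- (GR1): every symbol has at most one gluing partner for each type and orientation. -/
def GR1 (F : System S T) : Prop :=
  ∀ (t : T) (s : S), {b | F.glue t s b}.Subsingleton ∧ {a | F.glue t a s}.Subsingleton

/-- (GR2): for no type, orientation and symbol are the gluing-partner count and the
corresponding oriented degree in `G₁` simultaneously nonzero. -/
def GR2 (F : System S T) : Prop :=
  ∀ (t : T) (s : S),
    ¬ ((∃ b, F.glue t s b) ∧ ∃ b, F.E s b ∧ F.typ s b = t) ∧
    ¬ ((∃ a, F.glue t a s) ∧ ∃ a, F.E a s ∧ F.typ a s = t)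

/-- (GR3): `I_{t,-} ∩ I_{t,+} = ∅` for every type `t`. -/
def GR3 (F : System S T) : Prop := ∀ t : T, Iminus F t ∩ Iplus F t = ∅

/-- Assumption (GR). -/
def GR (F : System S T) : Prop := GR1 F ∧ GR2 F ∧ GR3 F

/-- A path in the replacement graph `G_L`: a nonempty list of words with consecutive
entries joined by an edge. -/
def IsPath [Nonempty T] (F : System S T) (L : ℕ) (θ : List (Word S L)) : Prop :=
  θ ≠ [] ∧ θ.Chain' (adjW F L)

open Classical in
/-- The projection `π_{L,k}` of a path: take length-`k` prefixes and remove consecutive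
repetitions. -/
noncomputable def proj {k L : ℕ} (h : k ≤ L) (θ : List (Word S L)) : List (Word S k) :=
  (θ.map fun w => fun i => w (Fin.castLE h i)).destutter (· ≠ ·)

/-- An intersection path in `G_{m+1}`: a path admitting a compatible sequence of paths at
all levels with uniformly bounded lengths. -/
def IsIntersectionPath [Nonempty T] (F : System S T) (m : ℕ) (θ : List (Word S (m + 1))) :
    Prop :=
  IsPath F (m + 1) θ ∧
  ∃ Θ : (n : ℕ) → List (Word S (n + 1)),
    Θ m = θ ∧ (∀ n, IsPath F (n + 1) (Θ n)) ∧
    (∀ (k n : ℕ) (h : k ≤ n), proj (Nat.succ_le_succ h) (Θ n) = Θ k) ∧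
    ∃ C : ℕ, ∀ n, (Θ n).length ≤ C

/-- The fundamental neighbourhood `𝒩(w)`. -/
def nbhd [Nonempty T] (F : System S T) (m : ℕ) (w : Word S (m + 1)) :
    Set (Word S (m + 1)) :=
  {v | ∃ θ, IsIntersectionPath F m θ ∧ θ.head? = some w ∧ θ.getLast? = some v}

/-- Bounded geometry: the diameters of fundamental neighbourhoods are uniformly bounded. -/
def BoundedGeometry [Nonempty T] (F : System S T) : Prop :=
  ∃ D : ℕ, ∀ (m : ℕ) (w : Word S (m + 1)), ∀ v₁ ∈ nbhd F m w, ∀ v₂ ∈ nbhd F m w,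
    (replGraph F (m + 1)).dist v₁ v₂ ≤ D

/-- `|w ∧ v| < L` for words of length `L`: the words differ at some index below the last. -/
def ncRel {L : ℕ} (w v : Word S L) : Prop := ∃ j : Fin L, (j : ℕ) + 1 < L ∧ w j ≠ v j

/-- A non-collapsing path: consecutive vertices satisfy `|w ∧ v| < L`. -/
def NonCollapsing {L : ℕ} (θ : List (Word S L)) : Prop := θ.Chain' ncRel

/-- A mapping between iterated graph systems. -/
structure Hom {S T S' T' : Type} (F : System S T) (F' : System S' T') where
  toFun : S → S'
  map_edge : ∀ x y, (F.E x y ∨ F.E y x) →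
    (toFun x = toFun y ∨ F'.E (toFun x) (toFun y) ∨ F'.E (toFun y) (toFun x))
  glue_collapse : ∀ w1 v1, F.E w1 v1 → toFun w1 = toFun v1 →
    ∀ w2 v2, F.glue (F.typ w1 v1) w2 v2 → toFun w2 = toFun v2
  glue_fwd : ∀ w1 v1, F.E w1 v1 → F'.E (toFun w1) (toFun v1) →
    ∀ w2 v2, F.glue (F.typ w1 v1) w2 v2 →
      F'.glue (F'.typ (toFun w1) (toFun v1)) (toFun w2) (toFun v2)
  glue_rev : ∀ w1 v1, F.E w1 v1 → F'.E (toFun v1) (toFun w1) →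
    ∀ w2 v2, F.glue (F.typ w1 v1) w2 v2 →
      F'.glue (F'.typ (toFun v1) (toFun w1)) (toFun v2) (toFun w2)

/-- An isomorphism between iterated graph systems: a pair of mutually inverse mappings. -/
structure Iso {S T S' T' : Type} (F : System S T) (F' : System S' T') where
  hom : Hom F F'
  inv : Hom F' F
  left_inv : ∀ x, inv.toFun (hom.toFun x) = x
  right_inv : ∀ y, hom.toFun (inv.toFun y) = y

/-- A flipping symmetry of type `t`. -/
def IsFlip (F : System S T) (t : T) (η : Iso F F) : Prop :=
  (∀ w ∈ Iplus F t, F.glue t w (η.hom.toFun w)) ∧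
  (∀ v ∈ Iminus F t, F.glue t (η.hom.toFun v) v)

/-- The data of a reflection symmetry of an iterated graph system: an involutive
isomorphism together with the partition `S = C ∪ D ∪ Δ` satisfying (D1)-(D4). -/
structure ReflData (F : System S T) where
  iso : Iso F F
  C : Set S
  D : Set S
  invol : ∀ x, iso.hom.toFun (iso.hom.toFun x) = x
  C_not_fixed : ∀ x ∈ C, iso.hom.toFun x ≠ x
  D_not_fixed : ∀ x ∈ D, iso.hom.toFun x ≠ x
  CD_disjoint : ∀ x, ¬ (x ∈ C ∧ x ∈ D)
  cover : ∀ x, x ∈ C ∨ x ∈ D ∨ iso.hom.toFun x = x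
  image_C : iso.hom.toFun '' C = D
  edge_CD : ∀ x ∈ C, ∀ y ∈ D, (F.E x y ∨ F.E y x) → iso.hom.toFun x = y
  D2 : ∀ w1 v1, F.E w1 v1 → iso.hom.toFun v1 = v1 →
    (w1 ∈ C → Iminus F (F.typ w1 v1) ⊆ C ∪ {x | iso.hom.toFun x = x}) ∧
    (w1 ∈ D → Iminus F (F.typ w1 v1) ⊆ D ∪ {x | iso.hom.toFun x = x})
  D3 : ∀ w1 v1, F.E w1 v1 → iso.hom.toFun w1 = w1 →
    (v1 ∈ C → Iplus F (F.typ w1 v1) ⊆ C ∪ {x | iso.hom.toFun x = x}) ∧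
    (v1 ∈ D → Iplus F (F.typ w1 v1) ⊆ D ∪ {x | iso.hom.toFun x = x})
  D4 : ∀ w1 v1, F.E w1 v1 → iso.hom.toFun w1 = w1 → iso.hom.toFun v1 = v1 →
    ∀ w2 v2, F.glue (F.typ w1 v1) w2 v2 →
      (w2 ∈ C ∧ v2 ∈ C) ∨ (w2 ∈ D ∧ v2 ∈ D) ∨
      (iso.hom.toFun w2 = w2 ∧ iso.hom.toFun v2 = v2)

/-- (D5): a reflection symmetry. -/
def IsRefl {F : System S T} (R : ReflData F) : Prop :=
  ∀ w1 v1, F.E w1 v1 → w1 ∈ R.C → v1 ∈ R.D →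
    ∀ w2 v2, F.glue (F.typ w1 v1) w2 v2 → R.iso.hom.toFun w2 = v2

/-- (D5*): a separative reflection symmetry. -/
def IsSepRefl {F : System S T} (R : ReflData F) : Prop :=
  ∀ x ∈ R.C, ∀ y ∈ R.D, ¬ (F.E x y ∨ F.E y x)

/-- The coordinatewise action of a reflection symmetry on words. -/
def wordMap {F : System S T} (R : ReflData F) {m : ℕ} (w : Word S m) : Word S m :=
  fun i => R.iso.hom.toFun (w i)

/-- The lifted set `C_α^{(m)}`: words whose first non-fixed coordinate lies in `C`. -/
def liftC {F : System S T} (R : ReflData F) (m : ℕ) : Set (Word S m) :=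
  {w | ∃ k : Fin m, w k ∈ R.C ∧ ∀ j < k, R.iso.hom.toFun (w j) = w j}

/-- The lifted set `D_α^{(m)}`: words whose first non-fixed coordinate lies in `D`. -/
def liftD {F : System S T} (R : ReflData F) (m : ℕ) : Set (Word S m) :=
  {w | ∃ k : Fin m, w k ∈ R.D ∧ ∀ j < k, R.iso.hom.toFun (w j) = w j}

end IGSP
namespace IGSP

variable {S T : Type}

/-- An antisymmetric function supported on the edges of a graph. -/
def Antisym {V : Type} (G : SimpleGraph V) (Φ : V → V → ℝ) : Prop :=
  (∀ x y, Φ x y = - Φ y x) ∧ ∀ x y, ¬ G.Adj x y → Φ x y = 0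

/-- The divergence of `Φ` at a vertex. -/
noncomputable def fdiv {V : Type} (Φ : V → V → ℝ) (x : V) : ℝ := ∑ᶠ y, Φ x y

/-- A flow from `A` to `B`. -/
def IsFlow {V : Type} (G : SimpleGraph V) (A B : Set V) (Φ : V → V → ℝ) : Prop :=
  Antisym G Φ ∧ ∀ x, x ∉ A ∪ B → fdiv Φ x = 0

/-- The total flow `I(Φ) = Σ_{x ∈ A} div Φ (x)`. -/
noncomputable def totalFlow {V : Type} (A : Set V) (Φ : V → V → ℝ) : ℝ :=
  ∑ᶠ x ∈ A, fdiv Φ x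

/-- The `q`-energy `E_q(Φ) = Σ_{{x,y} ∈ E} |Φ(x,y)|^q` (each unordered edge counted once). -/
noncomputable def energy {V : Type} (q : ℝ) (Φ : V → V → ℝ) : ℝ :=
  (∑ᶠ x, ∑ᶠ y, |Φ x y| ^ q) / 2

/-- The degree of a vertex of a graph. -/
noncomputable def degOf {V : Type} (G : SimpleGraph V) (x : V) : ℕ := {y | G.Adj x y}.ncard

/-- The maximal degree of a finite graph. -/
noncomputable def maxDeg {V : Type} [Fintype V] (G : SimpleGraph V) : ℕ :=
  Finset.univ.sup fun x => degOf G x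

/-- The diameter of a finite graph (in the shortest-path metric). -/
noncomputable def gdiam {V : Type} [Fintype V] (G : SimpleGraph V) : ℕ :=
  Finset.univ.sup fun pr : V × V => G.dist pr.1 pr.2

/-- The set of vertices of a path. -/
def pathVerts {V : Type} (θ : List V) : Set V := {x | x ∈ θ}

/-- A density is admissible for a path family if it is nonnegative and its sum along
every path of the family is at least 1. -/
def Admissible {V : Type} (Θ : Set (List V)) (ρ : V → ℝ) : Prop :=
  (∀ x, 0 ≤ ρ x) ∧ ∀ θ ∈ Θ, 1 ≤ ∑ᶠ x ∈ pathVerts θ, ρ x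

/-- The discrete (vertex) `p`-modulus of a family of paths. -/
noncomputable def modulus {V : Type} (p : ℝ) (Θ : Set (List V)) : ℝ :=
  sInf {M | ∃ ρ : V → ℝ, Admissible Θ ρ ∧ M = ∑ᶠ x, ρ x ^ p}

/-- The `p`-resistance `E_q(A,B,G)`: infimal `q`-energy of unit flows from `A` to `B`. -/
noncomputable def resistance {V : Type} (q : ℝ) (G : SimpleGraph V) (A B : Set V) : ℝ :=
  sInf {e | ∃ Φ, IsFlow G A B Φ ∧ totalFlow A Φ = 1 ∧ e = energy q Φ}

/-- The family `Θ_𝔞^{(m)}` of paths in `G_m` from `I_{t₁,★₁}^{(m)}` to `I_{t₂,★₂}^{(m)}`. -/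
def ThetaIGS [Nonempty T] (F : System S T) (m : ℕ) (t₁ : T) (b₁ : Bool) (t₂ : T)
    (b₂ : Bool) : Set (List (Word S m)) :=
  {θ | IsPath F m θ ∧ (∃ w ∈ IsetW F t₁ b₁ m, θ.head? = some w) ∧
    ∃ v ∈ IsetW F t₂ b₂ m, θ.getLast? = some v}

/-- `ℒ^{(m)}`, the collection of sets `I_{t,★}^{(m)}`. -/
def scriptL [Nonempty T] (F : System S T) (m : ℕ) : Set (Set (Word S m)) :=
  {A | ∃ (t : T) (b : Bool), A = IsetW F t b m}

/-- The added vertices `v_L` (for `L ∈ ℒ^{(m)}` and `v ∈ L`) of the graph `G̃_m`. -/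
def AddedV [Nonempty T] (F : System S T) (m : ℕ) :=
  {pr : Set (Word S m) × Word S m // pr.1 ∈ scriptL F m ∧ pr.2 ∈ pr.1}

/-- The vertex set of the graph `G̃_m`. -/
def TildeV [Nonempty T] (F : System S T) (m : ℕ) := Word S m ⊕ AddedV F m

/-- The graph `G̃_m`, obtained from `G_m` by attaching a pendant vertex `v_L` at every
`v ∈ L` for every `L ∈ ℒ^{(m)}`. -/
noncomputable def tildeG [Nonempty T] (F : System S T) (m : ℕ) : SimpleGraph (TildeV F m) where
  Adj x y :=
    match x, y with
    | Sum.inl w, Sum.inl v => w ≠ v ∧ adjW F m w v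
    | Sum.inl w, Sum.inr pr => pr.1.2 = w
    | Sum.inr pr, Sum.inl w => pr.1.2 = w
    | Sum.inr _, Sum.inr _ => False
  symm := by
    constructor
    rintro (w | pr) (v | qr) h
    · exact ⟨Ne.symm h.1, Or.symm h.2⟩
    · exact h
    · exact h
    · exact h.elim
  loopless := by
    constructor
    rintro (w | pr) h
    · exact h.1 rfl
    · exact h

/-- The set `L̃ = {v_L : v ∈ L}` of added vertices over `L`. -/
def tildeSet [Nonempty T] (F : System S T) (m : ℕ) (L : Set (Word S m)) :
    Set (TildeV F m) :=
  {x | ∃ pr : AddedV F m, pr.1.1 = L ∧ x = Sum.inr pr}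

/-- A flow basis on `G̃_m`: a family of unit flows between the added vertex sets of all
pairs of distinct members of `ℒ^{(m)}`, satisfying (FB1)–(FB4). -/
structure FlowBasis [Nonempty T] (F : System S T) (ηfam : T → Iso F F) (m : ℕ) where
  flow : (L₁ L₂ : Set (Word S m)) → L₁ ∈ scriptL F m → L₂ ∈ scriptL F m → L₁ ≠ L₂ →
    TildeV F m → TildeV F m → ℝ
  flow_isFlow : ∀ (L₁ L₂ : Set (Word S m)) (h₁ : L₁ ∈ scriptL F m) (h₂ : L₂ ∈ scriptL F m)
    (hne : L₁ ≠ L₂),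
    IsFlow (tildeG F m) (tildeSet F m L₁) (tildeSet F m L₂) (flow L₁ L₂ h₁ h₂ hne)
  flow_unit : ∀ (L₁ L₂ : Set (Word S m)) (h₁ : L₁ ∈ scriptL F m) (h₂ : L₂ ∈ scriptL F m)
    (hne : L₁ ≠ L₂), totalFlow (tildeSet F m L₁) (flow L₁ L₂ h₁ h₂ hne) = 1
  fb2 : ∀ (L₁ L₂ : Set (Word S m)) (h₁ : L₁ ∈ scriptL F m) (h₂ : L₂ ∈ scriptL F m)
    (hne : L₁ ≠ L₂) (pr : AddedV F m), pr.1.1 ≠ L₁ → pr.1.1 ≠ L₂ →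
    flow L₁ L₂ h₁ h₂ hne (Sum.inr pr) (Sum.inl pr.1.2) = 0
  fb3_out : ∀ (L L₁ L₂ : Set (Word S m)) (hL : L ∈ scriptL F m) (h₁ : L₁ ∈ scriptL F m)
    (h₂ : L₂ ∈ scriptL F m) (hne₁ : L ≠ L₁) (hne₂ : L ≠ L₂) (pr : AddedV F m),
    pr.1.1 = L →
    flow L L₁ hL h₁ hne₁ (Sum.inr pr) (Sum.inl pr.1.2) =
      flow L L₂ hL h₂ hne₂ (Sum.inr pr) (Sum.inl pr.1.2)
  fb3_in : ∀ (L L₁ L₂ : Set (Word S m)) (hL : L ∈ scriptL F m) (h₁ : L₁ ∈ scriptL F m)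
    (h₂ : L₂ ∈ scriptL F m) (hne₁ : L₁ ≠ L) (hne₂ : L₂ ≠ L) (pr : AddedV F m),
    pr.1.1 = L →
    flow L₁ L h₁ hL hne₁ (Sum.inl pr.1.2) (Sum.inr pr) =
      flow L₂ L h₂ hL hne₂ (Sum.inl pr.1.2) (Sum.inr pr)
  fb4_flip : ∀ (t : T) (b : Bool) (h₁ : IsetW F t b m ∈ scriptL F m)
    (h₂ : IsetW F t (!b) m ∈ scriptL F m) (hne : IsetW F t b m ≠ IsetW F t (!b) m)
    (pr qr : AddedV F m), pr.1.1 = IsetW F t b m → qr.1.1 = IsetW F t (!b) m →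
    qr.1.2 = (fun i => (ηfam t).hom.toFun (pr.1.2 i)) →
    flow (IsetW F t b m) (IsetW F t (!b) m) h₁ h₂ hne (Sum.inr pr) (Sum.inl pr.1.2) =
      flow (IsetW F t b m) (IsetW F t (!b) m) h₁ h₂ hne (Sum.inl qr.1.2) (Sum.inr qr)
  fb4_sym : ∀ (t : T) (b : Bool) (h₁ : IsetW F t b m ∈ scriptL F m)
    (h₂ : IsetW F t (!b) m ∈ scriptL F m) (hne : IsetW F t b m ≠ IsetW F t (!b) m)
    (hne' : IsetW F t (!b) m ≠ IsetW F t b m) (pr : AddedV F m),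
    pr.1.1 = IsetW F t b m →
    flow (IsetW F t b m) (IsetW F t (!b) m) h₁ h₂ hne (Sum.inr pr) (Sum.inl pr.1.2) =
      flow (IsetW F t (!b) m) (IsetW F t b m) h₂ h₁ hne' (Sum.inl pr.1.2) (Sum.inr pr)

/-- The `q`-energy of a flow basis: the maximal energy of its members. -/
noncomputable def basisEnergy [Nonempty T] {F : System S T} {ηfam : T → Iso F F} {m : ℕ}
    (q : ℝ) (FB : FlowBasis F ηfam m) : ℝ :=
  sSup {e | ∃ (L₁ L₂ : Set (Word S m)) (h₁ : L₁ ∈ scriptL F m) (h₂ : L₂ ∈ scriptL F m)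
    (hne : L₁ ≠ L₂), e = energy q (FB.flow L₁ L₂ h₁ h₂ hne)}

open Classical in
/-- The twisted flow `T_α(F)` of Proposition "Twist flow". -/
noncomputable def Talpha [Nonempty T] {F : System S T} {m : ℕ} (R : ReflData F)
    (L₁ L₂' : Set (Word S m)) (A : TildeV F m ≃ TildeV F m)
    (Φ : TildeV F m → TildeV F m → ℝ) : TildeV F m → TildeV F m → ℝ := fun x y =>
  if (∃ w, x = Sum.inl w ∧ wordMap R w = w) ∧ (∃ w, y = Sum.inl w ∧ wordMap R w = w) then
    Φ x y
  else if ((∃ w, x = Sum.inl w ∧ w ∈ liftC R m) ∨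
        (∃ pr : AddedV F m, x = Sum.inr pr ∧ (pr.1.1 = L₁ ∨ pr.1.1 = L₂'))) ∨
      ((∃ w, y = Sum.inl w ∧ w ∈ liftC R m) ∨
        (∃ pr : AddedV F m, y = Sum.inr pr ∧ (pr.1.1 = L₁ ∨ pr.1.1 = L₂'))) then
    Φ x y + Φ (A.symm x) (A.symm y)
  else 0

end IGSP
namespace IGSP

/-- The symbol set of the ambient cubical system: `{1,…,L}^d × {1,…,s}` (0-indexed). -/
abbrev CSym (d L s : ℕ) := (Fin d → Fin L) × Fin s

/-- The ambient edge relation of type `t_j`. -/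
def ambE {d L s : ℕ} (j : Fin d) (w v : CSym d L s) : Prop :=
  (∀ i, i ≠ j → w.1 i = v.1 i) ∧ (v.1 j : ℕ) = (w.1 j : ℕ) + 1

/-- The ambient gluing rule of type `t_j`. -/
def ambI {d L s : ℕ} (j : Fin d) (w v : CSym d L s) : Prop :=
  (∀ i, i ≠ j → w.1 i = v.1 i) ∧ (w.1 j : ℕ) = L - 1 ∧ (v.1 j : ℕ) = 0 ∧ w.2 = v.2

/-- A symbol lying on the `j`-axis edge of the cube: all other coordinates extremal
and label `1`. -/
def onAxis {d L s : ℕ} (j : Fin d) (w : CSym d L s) : Prop :=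
  (∀ i, i ≠ j → ((w.1 i : ℕ) = 0 ∨ (w.1 i : ℕ) = L - 1)) ∧ (w.2 : ℕ) = 0

/-- The coordinate reflection `η_j : c_j ↦ L + 1 - c_j`. -/
def etaMap {d L s : ℕ} (j : Fin d) (w : CSym d L s) : CSym d L s :=
  ⟨fun i => if i = j then ⟨L - 1 - (w.1 j : ℕ), by have := (w.1 j).isLt; omega⟩ else w.1 i,
    w.2⟩

/-- The diagonal reflection `α_{j,k}^+` exchanging coordinates `j` and `k`. -/
def swapMap {d L s : ℕ} (j k : Fin d) (w : CSym d L s) : CSym d L s :=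
  ⟨fun i => if i = j then w.1 k else if i = k then w.1 j else w.1 i, w.2⟩

/-- The anti-diagonal reflection `α_{j,k}^-`. -/
def aswapMap {d L s : ℕ} (j k : Fin d) (w : CSym d L s) : CSym d L s :=
  ⟨fun i =>
    if i = j then ⟨L - 1 - (w.1 k : ℕ), by have := (w.1 k).isLt; omega⟩
    else if i = k then ⟨L - 1 - (w.1 j : ℕ), by have := (w.1 j).isLt; omega⟩
    else w.1 i, w.2⟩

/-- A cubical iterated graph system: a sub-system of the ambient system `𝔉(d,L,s)`
satisfying the conditions (C1)–(C4). -/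
structure CubicalIGS (d L s : ℕ) where
  hd : 1 ≤ d
  hL : 3 ≤ L
  hs : 1 ≤ s
  Symb : Set (CSym d L s)
  sys : System (↥Symb) (Fin d)
  edge_amb : ∀ x y : ↥Symb, sys.E x y → ambE (sys.typ x y) x.1 y.1
  glue_amb : ∀ (j : Fin d) (x y : ↥Symb), sys.glue j x y → ambI j x.1 y.1
  C1 : ∀ w : CSym d L s, (∃ j, onAxis j w) → w ∈ Symb
  C2 : ∀ (j : Fin d) (x y : ↥Symb), onAxis j x.1 → onAxis j y.1 → ambE j x.1 y.1 →
    sys.E x y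
  C3 : ∀ (j : Fin d) (x y : ↥Symb), onAxis j x.1 → onAxis j y.1 → ambI j x.1 y.1 →
    sys.glue j x y
  C4_eta : ∀ j : Fin d, ∃ ψ : Iso sys sys,
    ∀ x : ↥Symb, (ψ.hom.toFun x : CSym d L s) = etaMap j x.1
  C4_plus : ∀ j k : Fin d, j ≠ k → ∃ ψ : Iso sys sys,
    ∀ x : ↥Symb, (ψ.hom.toFun x : CSym d L s) = swapMap j k x.1
  C4_minus : ∀ j k : Fin d, j ≠ k → ∃ ψ : Iso sys sys,
    ∀ x : ↥Symb, (ψ.hom.toFun x : CSym d L s) = aswapMap j k x.1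

/-- The corner symbol `𝐤`: first coordinate `k`, all other coordinates `1`, label `1`. -/
def cornerSym {d L s : ℕ} (cub : CubicalIGS d L s) (k : Fin L) : ↥cub.Symb :=
  ⟨⟨fun i => if (i : ℕ) = 0 then k else ⟨0, by have := k.isLt; omega⟩,
      ⟨0, by have := cub.hs; omega⟩⟩, by
    apply cub.C1
    refine ⟨⟨0, cub.hd⟩, fun i hi => ?_, rfl⟩
    have hiv : (i : ℕ) ≠ 0 := fun h => hi (Fin.ext h)
    left
    simp [hiv]⟩

end IGSP
namespace IGSP

/-- The edge relation of the Sierpiński gasket IGS. -/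
abbrev gasketE (x y : Fin 3) : Prop :=
  (x = 0 ∧ y = 1) ∨ (x = 1 ∧ y = 2) ∨ (x = 0 ∧ y = 2)

/-- The Sierpiński gasket iterated graph system. -/
noncomputable def gasket : System (Fin 3) (Fin 3) where
  E := gasketE
  not_both := by decide
  irrefl := by decide
  conn := by
    have hadj : ∀ a b : Fin 3, a ≠ b → gasketE a b ∨ gasketE b a := by decide
    intro x y
    rcases eq_or_ne x y with rfl | h
    · exact Relation.ReflTransGen.refl
    · exact Relation.ReflTransGen.single (hadj x y h)
  typ := fun x y => if x = 0 ∧ y = 1 then 0 else if x = 1 ∧ y = 2 then 1 else 2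
  typ_surj := by decide
  glue := fun t x y =>
    (t = 0 ∧ x = 1 ∧ y = 0) ∨ (t = 1 ∧ x = 2 ∧ y = 1) ∨ (t = 2 ∧ x = 2 ∧ y = 0)
  glue_nonempty := by decide

open Fin.NatCast in
/-- The pentagonal Sierpiński carpet iterated graph system. -/
noncomputable def pentagon : System (Fin 5) (Fin 5) where
  E := fun x y => y = x + 1
  not_both := by decide
  irrefl := by decide
  conn := by
    intro x y
    have key : ∀ (k : ℕ) (z : Fin 5),
        Relation.ReflTransGen (fun a b : Fin 5 => b = a + 1 ∨ a = b + 1) z (z + (k : Fin 5)) := by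
      intro k
      induction k with
      | zero => intro z; simpa using Relation.ReflTransGen.refl
      | succ n ih =>
          intro z
          have h : ((n + 1 : ℕ) : Fin 5) = ((n : ℕ) : Fin 5) + 1 := by push_cast; ring
          rw [h, ← add_assoc]
          exact (ih z).tail (Or.inl rfl)
    have h2 := key ((y - x : Fin 5) : ℕ) x
    rw [Fin.cast_val_eq_self] at h2
    have h3 : x + (y - x) = y := by abel
    rwa [h3] at h2
  typ := fun x _ => x
  typ_surj := fun t => ⟨t, t + 1, rfl, rfl⟩
  glue := fun t x y => (x = t + 1 ∧ y = t) ∨ (x = t + 2 ∧ y = t + 4)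
  glue_nonempty := fun t => ⟨t + 1, t, Or.inl ⟨rfl, rfl⟩⟩

/-- The interval iterated graph system `𝔉(1, L)`. -/
noncomputable def intervalSys (L : ℕ) (hL : 3 ≤ L) : System (Fin L) Unit where
  E x y := (y : ℕ) = (x : ℕ) + 1
  not_both := by intro x y h h'; omega
  irrefl := by intro x h; omega
  conn := by
    have key : ∀ (k : ℕ) (hk : k < L),
        Relation.ReflTransGen (fun a b : Fin L => ((b : ℕ) = (a : ℕ) + 1) ∨ ((a : ℕ) = (b : ℕ) + 1))
          ⟨0, by omega⟩ ⟨k, hk⟩ := by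
      intro k
      induction k with
      | zero => intro hk; exact Relation.ReflTransGen.refl
      | succ n ih =>
          intro hk
          exact Relation.ReflTransGen.tail (ih (by omega)) (Or.inl rfl)
    intro x y
    have hsymm : Std.Symm fun a b : Fin L => ((b : ℕ) = (a : ℕ) + 1) ∨ ((a : ℕ) = (b : ℕ) + 1) :=
      ⟨fun a b h => h.symm⟩
    have hx := key x.val x.isLt
    have hy := key y.val y.isLt
    simp only [Fin.eta] at hx hy
    exact Relation.ReflTransGen.trans (Std.Symm.symm _ _ hx) hy
  typ := fun _ _ => ()
  typ_surj := by
    intro t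
    refine ⟨⟨0, by omega⟩, ⟨1, by omega⟩, rfl, ?_⟩
    cases t; rfl
  glue := fun _ x y => (x : ℕ) = L - 1 ∧ (y : ℕ) = 0
  glue_nonempty := fun _ => ⟨⟨L - 1, by omega⟩, ⟨0, by omega⟩, rfl, rfl⟩

variable {S T : Type}

/-- A folding of `G_{k+n}` onto `w̃ · W_n`: a graph mapping into the induced subgraph on
`w̃ · W_n` which fixes `w̃ · W_n` pointwise. -/
def HasFolding [Nonempty T] (F : System S T) (k n : ℕ) (wt : Word S k) : Prop :=
  ∃ f : Word S (k + n) → Word S (k + n),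
    (∀ x, ∃ u : Word S n, f x = Fin.append wt u) ∧
    (∀ u : Word S n, f (Fin.append wt u) = Fin.append wt u) ∧
    (∀ x y, adjW F (k + n) x y → f x = f y ∨ adjW F (k + n) (f x) (f y))

end IGSP

/-!
Fix a direction `k ≠ j`. For each `b : Bool`, the symbols of the `j`-axis edge of the cube whose
`k`-th coordinate is `1` (`b = false`) or `L*` (`b = true`), all other coordinates being `1`,
form a chain `x₁ → ⋯ → x_{L*}` of type-`t_j` edges of `G₁` with `(x_{L*}, x₁) ∈ I_{t_j}`.
Choosing such a chain for every letter position, the words of `G_m` listed in odometer order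
form a path of type-`t_j` edges from `I_{t_j,-}^{(m)}` to `I_{t_j,+}^{(m)}`: a step changing only
the last letter is an edge of `G₁`, and a carry is a gluing across an edge of the prefix. The
`2^m` choices give vertex-disjoint paths, since the `k`-th coordinate of the `i`-th letter
records the `i`-th choice.
-/

theorem Nat.exists_lt_testBit_ne {m p q : ℕ} (hp : p < 2 ^ m) (hq : q < 2 ^ m) (hpq : p ≠ q) :
    ∃ i < m, p.testBit i ≠ q.testBit i := by
  obtain ⟨i, hi⟩ := Nat.exists_testBit_ne_of_ne hpq
  refine ⟨i, lt_of_not_ge fun him => hi ?_, hi⟩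
  have h := Nat.pow_le_pow_right two_pos him
  rw [Nat.testBit_lt_two_pow (hp.trans_le h), Nat.testBit_lt_two_pow (hq.trans_le h)]

namespace IGSP

section GluedChain

variable {S T : Type} {F : System S T} {t : T}

variable (F t) in
def IsGluedChain (l : List S) : Prop :=
  l ≠ [] ∧ l.IsChain (fun a b => F.E a b ∧ F.typ a b = t) ∧
    ∀ a ∈ l.getLast?, ∀ b ∈ l.head?, F.glue t a b

theorem IsGluedChain.mem_Iminus {l : List S} (hl : IsGluedChain F t l) {b : S}
    (hb : b ∈ l.head?) : b ∈ Iminus F t :=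
  ⟨l.getLast hl.1, hl.2.2 _ (List.getLast?_eq_some_getLast hl.1) b hb⟩

theorem IsGluedChain.mem_Iplus {l : List S} (hl : IsGluedChain F t l) {a : S}
    (ha : a ∈ l.getLast?) : a ∈ Iplus F t :=
  ⟨l.head hl.1, hl.2.2 a ha _ (List.head?_eq_some_head hl.1)⟩

end GluedChain

section Odometer

variable {S T : Type} [Nonempty T] {F : System S T} {t : T}

theorem edge_add_two_iff {m : ℕ} {w v : Word S (m + 2)} :
    edge F (m + 2) w v ↔
      (Fin.init w = Fin.init v ∧ F.E (w (Fin.last _)) (v (Fin.last _))) ∨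
      (edge F (m + 1) (Fin.init w) (Fin.init v) ∧
        F.glue (etyp F (m + 1) (Fin.init w) (Fin.init v)) (w (Fin.last _)) (v (Fin.last _))) :=
  Iff.rfl

open Classical in
theorem etyp_add_two {m : ℕ} (w v : Word S (m + 2)) :
    etyp F (m + 2) w v =
      if Fin.init w = Fin.init v then F.typ (w (Fin.last _)) (v (Fin.last _))
      else etyp F (m + 1) (Fin.init w) (Fin.init v) :=
  rfl

theorem edge_irrefl : ∀ {m : ℕ} (w : Word S m), ¬ edge F m w w
  | 0, _ => id
  | 1, w => F.irrefl (w 0)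
  | _ + 2, w => by
    rintro (⟨-, h⟩ | ⟨h, -⟩)
    exacts [F.irrefl _ h, edge_irrefl _ h]

variable (F) in
def TypedEdge (m : ℕ) (t : T) (w v : Word S m) : Prop :=
  edge F m w v ∧ etyp F m w v = t

theorem typedEdge_snoc_of_E {m : ℕ} (w : Word S m) {a b : S} (hab : F.E a b)
    (ht : F.typ a b = t) : TypedEdge F (m + 1) t (Fin.snoc w a) (Fin.snoc w b) := by
  cases m with
  | zero => exact ⟨hab, ht⟩
  | succ m =>
    have hinit :
        Fin.init (Fin.snoc w a : Word S (m + 2)) = Fin.init (Fin.snoc w b : Word S (m + 2)) := by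
      rw [Fin.init_snoc, Fin.init_snoc]
    refine ⟨edge_add_two_iff.2 (Or.inl ⟨hinit, ?_⟩), ?_⟩
    · simpa only [Fin.snoc_last] using hab
    · simpa only [etyp_add_two, if_pos hinit, Fin.snoc_last] using ht

theorem typedEdge_snoc_of_glue {m : ℕ} {w v : Word S m} (hwv : TypedEdge F m t w v) {a b : S}
    (hab : F.glue t a b) : TypedEdge F (m + 1) t (Fin.snoc w a) (Fin.snoc v b) := by
  cases m with
  | zero => exact hwv.1.elim
  | succ m =>
    have hinit :
        Fin.init (Fin.snoc w a : Word S (m + 2)) ≠ Fin.init (Fin.snoc v b : Word S (m + 2)) := by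
      rw [Fin.init_snoc, Fin.init_snoc]
      rintro rfl
      exact edge_irrefl w hwv.1
    refine ⟨edge_add_two_iff.2 (Or.inr ⟨?_, ?_⟩), ?_⟩
    · simpa only [Fin.init_snoc] using hwv.1
    · simpa only [Fin.init_snoc, Fin.snoc_last, hwv.2] using hab
    · rw [etyp_add_two, if_neg hinit, Fin.init_snoc, Fin.init_snoc]
      exact hwv.2

/-- The `i`-th letter runs through `c i`, the last letter fastest: when it wraps around from
the end of `c m` to its start, the prefix advances by one step. -/
def odometer (c : ℕ → List S) : (m : ℕ) → List (Word S m)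
  | 0 => [Fin.elim0]
  | m + 1 => (odometer c m).flatMap fun w => (c m).map (Fin.snoc w)

theorem forall_snoc_of_forall {p : ℕ → S → Prop} {m : ℕ} {v : Word S m} {a : S}
    (hv : ∀ i : Fin m, p i (v i)) (ha : p m a) :
    ∀ i : Fin (m + 1), p i (Fin.snoc (α := fun _ => S) v a i) :=
  Fin.lastCases (by simpa using ha) fun i => by simpa using hv i

theorem mem_odometer {c : ℕ → List S} :
    ∀ {m : ℕ} {w : Word S m}, w ∈ odometer c m → ∀ i : Fin m, w i ∈ c i
  | 0, _, _, i => i.elim0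
  | m + 1, w, hw, i => by
    obtain ⟨v, hv, a, ha, rfl⟩ :
        ∃ v ∈ odometer c m, ∃ a ∈ c m, (Fin.snoc v a : Word S (m + 1)) = w := by
      simpa [odometer] using hw
    exact forall_snoc_of_forall (p := fun i x => x ∈ c i) (mem_odometer hv) ha i

theorem odometer_ne_nil {c : ℕ → List S} (hc : ∀ i, c i ≠ []) :
    ∀ m, odometer c m ≠ []
  | 0 => List.cons_ne_nil _ _
  | m + 1 => by
    obtain ⟨v, hv⟩ := List.exists_mem_of_ne_nil _ (odometer_ne_nil hc m)
    rw [odometer, Ne, List.flatMap_eq_nil_iff]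
    exact fun h => hc m (List.map_eq_nil_iff.1 (h v hv))

theorem isChain_odometer {c : ℕ → List S} (hc : ∀ i, IsGluedChain F t (c i)) :
    ∀ m, (odometer c m).IsChain (TypedEdge F m t)
  | 0 => List.isChain_singleton _
  | m + 1 => by
    rw [odometer, List.flatMap_def, List.isChain_flatten, List.forall_mem_map, List.isChain_map]
    swap
    · simp [(hc m).1]
    refine ⟨fun w _ => ?_, (isChain_odometer hc m).imp fun w v hwv => ?_⟩
    · rw [List.isChain_map]
      exact (hc m).2.1.imp fun a b hab => typedEdge_snoc_of_E w hab.1 hab.2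
    · simp only [List.getLast?_map, List.head?_map, Option.mem_map]
      rintro _ ⟨a, ha, rfl⟩ _ ⟨b, hb, rfl⟩
      exact typedEdge_snoc_of_glue hwv ((hc m).2.2 a ha b hb)

theorem mem_head?_odometer {c : ℕ → List S} (hc : ∀ i, c i ≠ []) :
    ∀ {m : ℕ} {w : Word S m}, w ∈ (odometer c m).head? → ∀ i : Fin m, w i ∈ (c i).head?
  | 0, _, _, i => i.elim0
  | m + 1, w, hw, i => by
    obtain ⟨v, rest, hvr⟩ := List.exists_cons_of_ne_nil (odometer_ne_nil hc m)
    have hv : v ∈ (odometer c m).head? := by simp [hvr]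
    obtain ⟨a, ha, rfl⟩ : ∃ a ∈ (c m).head?, (Fin.snoc v a : Word S (m + 1)) = w := by
      rw [odometer, hvr, List.flatMap_cons,
        List.head?_append_of_ne_nil _ (by simpa using hc m), List.head?_map] at hw
      simpa using hw
    exact forall_snoc_of_forall (p := fun i x => x ∈ (c i).head?)
      (mem_head?_odometer hc hv) ha i

theorem mem_getLast?_odometer {c : ℕ → List S} (hc : ∀ i, c i ≠ []) :
    ∀ {m : ℕ} {w : Word S m}, w ∈ (odometer c m).getLast? → ∀ i : Fin m, w i ∈ (c i).getLast?
  | 0, _, _, i => i.elim0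
  | m + 1, w, hw, i => by
    have hv := List.getLast?_eq_some_getLast (odometer_ne_nil hc m)
    obtain ⟨rest, hrest⟩ := List.getLast?_eq_some_iff.1 hv
    obtain ⟨a, ha, rfl⟩ :
        ∃ a ∈ (c m).getLast?, (Fin.snoc ((odometer c m).getLast _) a : Word S (m + 1)) = w := by
      rw [odometer, hrest, List.flatMap_append, List.flatMap_singleton,
        List.getLast?_append_of_ne_nil _ (by simpa using hc m), List.getLast?_map] at hw
      simpa using hw
    exact forall_snoc_of_forall (p := fun i x => x ∈ (c i).getLast?)
      (mem_getLast?_odometer hc hv) ha i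

theorem odometer_mem_thetaIGS {c : ℕ → List S} (hc : ∀ i, IsGluedChain F t (c i)) (m : ℕ) :
    odometer c m ∈ ThetaIGS F m t false t true := by
  have hne := odometer_ne_nil (fun i => (hc i).1) m
  refine ⟨⟨hne, (isChain_odometer hc m).imp fun _ _ h => Or.inl h.1⟩,
    ⟨_, fun i => ?_, List.head?_eq_some_head hne⟩,
    ⟨_, fun i => ?_, List.getLast?_eq_some_getLast hne⟩⟩
  · exact (hc i).mem_Iminus
      (mem_head?_odometer (fun i => (hc i).1) (List.head?_eq_some_head hne) i)
  · exact (hc i).mem_Iplus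
      (mem_getLast?_odometer (fun i => (hc i).1) (List.getLast?_eq_some_getLast hne) i)

end Odometer

namespace CubicalIGS

variable {d L s : ℕ} (cub : CubicalIGS d L s)

theorem typ_eq_of_E {x y : ↥cub.Symb} (hxy : cub.sys.E x y) {j : Fin d}
    (hj : x.1.1 j ≠ y.1.1 j) : cub.sys.typ x y = j := by
  by_contra h
  exact hj ((cub.edge_amb x y hxy).1 j (Ne.symm h))

def axisPoint (j k : Fin d) (b : Bool) (x : Fin L) : CSym d L s :=
  (fun i => if i = j then x else if b ∧ i = k then ⟨L - 1, by have := cub.hL; omega⟩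
    else ⟨0, by have := cub.hL; omega⟩, ⟨0, cub.hs⟩)

theorem onAxis_axisPoint (j k : Fin d) (b : Bool) (x : Fin L) :
    onAxis j (cub.axisPoint j k b x) := by
  refine ⟨fun i hi => ?_, rfl⟩
  simp only [axisPoint, if_neg hi]
  split_ifs <;> simp

def axisSymb (j k : Fin d) (b : Bool) (x : Fin L) : ↥cub.Symb :=
  ⟨cub.axisPoint j k b x, cub.C1 _ ⟨j, cub.onAxis_axisPoint j k b x⟩⟩

def axisChain (j k : Fin d) (b : Bool) : List ↥cub.Symb :=
  List.ofFn (cub.axisSymb j k b)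

theorem isGluedChain_axisChain (j k : Fin d) (b : Bool) :
    IsGluedChain cub.sys j (cub.axisChain j k b) := by
  have hL := cub.hL
  have hne : List.ofFn (cub.axisSymb j k b) ≠ [] := by simp; omega
  refine ⟨hne, ?_, ?_⟩
  · rw [axisChain, List.isChain_ofFn]
    intro x hx
    have hE := cub.C2 j (cub.axisSymb j k b ⟨x, by omega⟩) (cub.axisSymb j k b ⟨x + 1, hx⟩)
      (cub.onAxis_axisPoint ..) (cub.onAxis_axisPoint ..)
      ⟨fun i hi => by simp [axisSymb, axisPoint, hi], by simp [axisSymb, axisPoint]⟩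
    exact ⟨hE, cub.typ_eq_of_E hE (by simp [axisSymb, axisPoint])⟩
  · rw [axisChain, List.getLast?_eq_some_getLast hne, List.head?_eq_some_head hne,
      List.getLast_ofFn, List.head_ofFn]
    rintro _ ⟨⟩ _ ⟨⟩
    exact cub.C3 j _ _ (cub.onAxis_axisPoint ..) (cub.onAxis_axisPoint ..)
      ⟨fun i hi => by simp [axisSymb, axisPoint, hi], by simp [axisSymb, axisPoint],
        by simp [axisSymb, axisPoint], rfl⟩

theorem eq_of_mem_axisChain {j k : Fin d} (hjk : j ≠ k) {b b' : Bool} {x : ↥cub.Symb}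
    (hx : x ∈ cub.axisChain j k b) (hx' : x ∈ cub.axisChain j k b') : b = b' := by
  rw [axisChain, List.mem_ofFn] at hx hx'
  obtain ⟨y, rfl⟩ := hx
  obtain ⟨y', h⟩ := hx'
  have hk := congrArg (fun z : ↥cub.Symb => (z.1.1 k : ℕ)) h
  have hL := cub.hL
  cases b <;> cases b' <;> simp [axisSymb, axisPoint, Ne.symm hjk] at hk ⊢ <;> omega

theorem exists_disjoint_typedEdge_paths [Nonempty (Fin d)] {j k : Fin d} (hjk : j ≠ k)
    (m : ℕ) :
    ∃ P : Fin (2 ^ m) → List (Word ↥cub.Symb m),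
      (∀ p, P p ∈ ThetaIGS cub.sys m j false j true ∧ (P p).IsChain (TypedEdge cub.sys m j)) ∧
      ∀ p q, p ≠ q → ∀ x ∈ P p, x ∉ P q := by
  have hc (p : ℕ) (i : ℕ) := cub.isGluedChain_axisChain j k (p.testBit i)
  refine ⟨fun p => odometer (fun i => cub.axisChain j k (p.val.testBit i)) m,
    fun p => ⟨odometer_mem_thetaIGS (hc p) m, isChain_odometer (hc p) m⟩,
    fun p q hpq x hxp hxq => ?_⟩
  obtain ⟨i, him, hi⟩ := Nat.exists_lt_testBit_ne p.isLt q.isLt (Fin.val_ne_of_ne hpq)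
  exact hi (cub.eq_of_mem_axisChain hjk (mem_odometer hxp ⟨i, him⟩)
    (mem_odometer hxq ⟨i, him⟩))

end CubicalIGS

/-- In a cubical iterated graph system with `d* ≥ 2`, every replacement
graph `G_m` contains at least `2^m` pairwise vertex-disjoint paths from `I_{t₁,-}^{(m)}`
to `I_{t₁,+}^{(m)}` all of whose edges have type `t₁`; in particular, for every `M` there
are `m` and `t` with at least `M` pairwise disjoint paths in `Θ(I_{t,-}^{(m)},
I_{t,+}^{(m)}, G_m)`. -/
theorem statement19 (d L s : ℕ) (cub : CubicalIGS d L s) (hd2 : 2 ≤ d) :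
    letI : Nonempty (Fin d) := ⟨⟨0, cub.hd⟩⟩
    (∀ m : ℕ, 1 ≤ m → ∃ P : Fin (2 ^ m) → List (Word (↥cub.Symb) m),
      (∀ i, IsPath cub.sys m (P i) ∧
        (∃ w ∈ IsetW cub.sys ⟨0, cub.hd⟩ false m, (P i).head? = some w) ∧
        (∃ v ∈ IsetW cub.sys ⟨0, cub.hd⟩ true m, (P i).getLast? = some v) ∧
        (P i).Chain' (fun x y =>
          (edge cub.sys m x y ∧ etyp cub.sys m x y = ⟨0, cub.hd⟩) ∨
          (edge cub.sys m y x ∧ etyp cub.sys m y x = ⟨0, cub.hd⟩))) ∧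
      ∀ i j, i ≠ j → ∀ x, x ∈ P i → x ∉ P j) ∧
    (∀ M : ℕ, ∃ (m : ℕ) (t : Fin d) (P : Fin M → List (Word (↥cub.Symb) m)),
      (∀ i, P i ∈ ThetaIGS cub.sys m t false t true) ∧
      ∀ i j, i ≠ j → ∀ x, x ∈ P i → x ∉ P j) := by
  have : Nonempty (Fin d) := ⟨⟨0, cub.hd⟩⟩
  have hjk : (⟨0, cub.hd⟩ : Fin d) ≠ ⟨1, hd2⟩ := by simp [Fin.ext_iff]
  have paths := cub.exists_disjoint_typedEdge_paths hjk
  refine ⟨fun m _ => ?_, fun M => ?_⟩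
  · obtain ⟨P, hP, hdisj⟩ := paths m
    exact ⟨P, fun p => ⟨(hP p).1.1, (hP p).1.2.1, (hP p).1.2.2,
      (hP p).2.imp fun _ _ h => Or.inl h⟩, hdisj⟩
  · obtain ⟨P, hP, hdisj⟩ := paths M
    have hM : M ≤ 2 ^ M := M.lt_two_pow_self.le
    exact ⟨M, _, fun i => P (Fin.castLE hM i), fun i => (hP _).1,
      fun i i' h => hdisj _ _ fun h' => h (Fin.castLE_injective hM h')⟩

end IGSP
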